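/- Let T be a thread of length l and width a, let M be a metric space, N ⊆ M closed, and F : T → M a K-Lipschitz map. Suppose I is an extended interval of T with extreme points a', b' that is maximal with respect to F and N (i.e., F(I) ⊆ N and no strictly larger extended interval has image in N), and suppose there is s ∈ N such that both F(a') and F(b') are bound to s in N, meaning d(F(a'), x) = d(F(a'), s) + d(s, x) and d(F(b'), x) = d(F(b'), s) + d(s, x) for all x ∈ M \ N. Then the map G : T → M defined by G(x) = s for x ∈ I and G(x) = F(x) for x ∈ T \ I satisfies ‖G‖_Lip ≤ ‖F‖_Lip. -/
import Mathlib


open Set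

/-- The thread metric of length `l` and width `a`. -/
noncomputable def threadDist (l a x y : ℝ) : ℝ :=
  min |x - y| (min (x + (l - y) + a) (y + (l - x) + a))

/-- `T` is (the underlying set of) an ℝ-thread of length `l`:
a closed subset of `[0, l]` containing `0` and `l`. -/
def IsThread (T : Set ℝ) (l : ℝ) : Prop :=
  IsClosed T ∧ T ⊆ Set.Icc 0 l ∧ (0 : ℝ) ∈ T ∧ l ∈ T

/-- `(x, y)` is a gap of `T`: a nonempty open interval with endpoints in `T`
and disjoint from `T`. -/
def IsGap (T : Set ℝ) (x y : ℝ) : Prop :=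
  x ∈ T ∧ y ∈ T ∧ x < y ∧ Set.Ioo x y ∩ T = ∅

/-- An extended interval of a thread `T` of length `l`, with extreme points
`p < q` in `T`: either `[p,q] ∩ T` or `([0,p] ∪ [q,l]) ∩ T`. -/
def IsExtInterval (T : Set ℝ) (l : ℝ) (I : Set ℝ) (p q : ℝ) : Prop :=
  p ∈ T ∧ q ∈ T ∧ p < q ∧
    (I = Set.Icc p q ∩ T ∨ I = (Set.Icc 0 p ∪ Set.Icc q l) ∩ T)

lemma td_comm (l a x y : ℝ) : threadDist l a x y = threadDist l a y x := by
  unfold threadDist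
  rw [abs_sub_comm, min_comm (x + (l - y) + a)]

lemma td_le_sub_right (l a : ℝ) {x y : ℝ} (h : x ≤ y) : threadDist l a x y ≤ y - x := by
  refine (min_le_left _ _).trans ?_
  rw [abs_sub_comm, abs_of_nonneg (by linarith)]

lemma td_le_sub_left (l a : ℝ) {x y : ℝ} (h : y ≤ x) : threadDist l a x y ≤ x - y := by
  refine (min_le_left _ _).trans ?_
  rw [abs_of_nonneg (by linarith)]

lemma td_le_wrap1 (l a x y : ℝ) : threadDist l a x y ≤ x + (l - y) + a :=
  (min_le_right _ _).trans (min_le_left _ _)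

lemma td_le_wrap2 (l a x y : ℝ) : threadDist l a x y ≤ y + (l - x) + a :=
  (min_le_right _ _).trans (min_le_right _ _)

lemma td_eq_min (l a : ℝ) {x y : ℝ} (h : x ≤ y) :
    threadDist l a x y = min (y - x) (x + (l - y) + a) := by
  unfold threadDist
  rw [abs_sub_comm, abs_of_nonneg (by linarith),
    min_eq_left (by linarith : x + (l - y) + a ≤ y + (l - x) + a)]

lemma td_nonneg (l : ℝ) {a x y : ℝ} (ha : 0 ≤ a) (hx : x ∈ Set.Icc 0 l)
    (hy : y ∈ Set.Icc 0 l) : 0 ≤ threadDist l a x y := by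
  obtain ⟨hx0, hxl⟩ := hx; obtain ⟨hy0, hyl⟩ := hy
  exact le_min (abs_nonneg _) (le_min (by linarith) (by linarith))

/-- collapsing a maximal extended interval whose endpoint images
are bound to a common point `s ∈ N` does not increase the Lipschitz constant. -/
theorem collapse_maximal_interval {M : Type*} [MetricSpace M]
    (l a : ℝ) (ha : 0 < a) (hal : a ≤ l)
    (T : Set ℝ) (hT : IsThread T l)
    (N : Set M) (hN : IsClosed N)
    (K : ℝ) (F : ℝ → M)
    (hFlip : ∀ x ∈ T, ∀ y ∈ T, dist (F x) (F y) ≤ K * threadDist l a x y)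
    (I : Set ℝ) (a' b' : ℝ) (hI : IsExtInterval T l I a' b')
    (hIN : F '' I ⊆ N)
    (hmax : ∀ J p' q', IsExtInterval T l J p' q' → I ⊆ J → F '' J ⊆ N → J = I)
    (s : M) (hs : s ∈ N)
    (hbound_a : ∀ x ∉ N, dist (F a') x = dist (F a') s + dist s x)
    (hbound_b : ∀ x ∉ N, dist (F b') x = dist (F b') s + dist s x)
    (G : ℝ → M) (hGdef : ∀ x, (x ∈ I → G x = s) ∧ (x ∉ I → G x = F x)) :
    ∀ x ∈ T, ∀ y ∈ T, dist (G x) (G y) ≤ K * threadDist l a x y := by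
  obtain ⟨hTc, hsub, h0T, hlT⟩ := hT
  have hK : 0 ≤ K := by
    have h := hFlip 0 h0T l hlT
    have hd : threadDist l a 0 l = a := by
      unfold threadDist
      have h1 : |(0:ℝ) - l| = l := by rw [abs_of_nonpos (by linarith)]; ring
      rw [h1, min_eq_left (by linarith : (0:ℝ) + (l - l) + a ≤ l + (l - 0) + a),
        min_eq_right (by linarith : (0:ℝ) + (l - l) + a ≤ l)]
      ring
    rw [hd] at h
    nlinarith [dist_nonneg (x := F 0) (y := F l)]
  -- core step: bound `dist s (F y)` using a strictly larger extended interval J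
  have core : ∀ c ∈ T, (∀ w ∉ N, dist (F c) w = dist (F c) s + dist s w) →
      ∀ y ∈ T, ∀ (J : Set ℝ) (p' q' : ℝ), IsExtInterval T l J p' q' → I ⊆ J → y ∈ J →
      y ∉ I → ∀ D : ℝ,
      (∀ z ∈ J, z ∉ I → threadDist l a c z + threadDist l a z y ≤ D) →
      dist s (F y) ≤ K * D := by
    intro c hcT hbc y hyT J p' q' hJ hIJ hyJ hyI D hD
    have hne : J ≠ I := fun h => hyI (h ▸ hyJ)
    have hnsub : ¬ (F '' J ⊆ N) := fun h => hne (hmax J p' q' hJ hIJ h)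
    rw [Set.image_subset_iff] at hnsub
    obtain ⟨z, hzJ, hzN⟩ := not_subset.mp hnsub
    have hzN : F z ∉ N := hzN
    have hzI : z ∉ I := fun h => hzN (hIN ⟨z, h, rfl⟩)
    have hzT : z ∈ T := by
      rcases hJ.2.2.2 with h | h
      · exact (h ▸ hzJ).2
      · exact (h ▸ hzJ).2
    calc dist s (F y) ≤ dist s (F z) + dist (F z) (F y) := dist_triangle _ _ _
      _ ≤ dist (F c) (F z) + dist (F z) (F y) := by
          have h1 := hbc (F z) hzN
          have h2 := dist_nonneg (x := F c) (y := s)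
          linarith
      _ ≤ K * threadDist l a c z + K * threadDist l a z y :=
          add_le_add (hFlip c hcT z hzT) (hFlip z hzT y hyT)
      _ = K * (threadDist l a c z + threadDist l a z y) := by ring
      _ ≤ K * D := mul_le_mul_of_nonneg_left (hD z hzJ hzI) hK
  -- the mixed case
  have mixed : ∀ x ∈ I, ∀ y ∈ T, y ∉ I → dist s (F y) ≤ K * threadDist l a x y := by
    intro x hxI y hyT hyI
    obtain ⟨ha'T, hb'T, hab, hIeq⟩ := hI
    have ha'0 : 0 ≤ a' := (hsub ha'T).1
    have ha'l : a' ≤ l := (hsub ha'T).2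
    have hb'0 : 0 ≤ b' := (hsub hb'T).1
    have hb'l : b' ≤ l := (hsub hb'T).2
    have hy0 : 0 ≤ y := (hsub hyT).1
    have hyl : y ≤ l := (hsub hyT).2
    rcases hIeq with hIeq | hIeq
    · -- I = Icc a' b' ∩ T
      have hx : x ∈ Set.Icc a' b' := (hIeq ▸ hxI).1
      have hy' : y ∉ Set.Icc a' b' := fun h => hyI (hIeq ▸ ⟨h, hyT⟩)
      rcases lt_or_ge y a' with hya | hya
      · -- y < a' ≤ x
        have hyx : y ≤ x := by linarith [hx.1]
        rw [td_comm, td_eq_min l a hyx]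
        rcases le_total (x - y) (y + (l - x) + a) with hm | hm
        · rw [min_eq_left hm]
          refine core a' ha'T hbound_a y hyT (Set.Icc y b' ∩ T) y b'
            ⟨hyT, hb'T, by linarith, Or.inl rfl⟩ ?_ ⟨⟨le_refl y, by linarith⟩, hyT⟩ hyI _ ?_
          · rw [hIeq]
            exact Set.inter_subset_inter_left _ (Set.Icc_subset_Icc_left (by linarith))
          · intro z hzJ hzI
            have hzT := hzJ.2
            have hza : z < a' := by
              by_contra h; push_neg at h
              exact hzI (hIeq ▸ ⟨⟨h, hzJ.1.2⟩, hzT⟩)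
            have h1 := td_le_sub_left l a (le_of_lt hza)
            have h2 := td_le_sub_left l a hzJ.1.1
            linarith [hx.1]
        · rw [min_eq_right hm]
          refine core b' hb'T hbound_b y hyT ((Set.Icc 0 y ∪ Set.Icc a' l) ∩ T) y a'
            ⟨hyT, ha'T, hya, Or.inr rfl⟩ ?_ ⟨Or.inl ⟨hy0, le_refl y⟩, hyT⟩ hyI _ ?_
          · rw [hIeq]
            intro w hw
            exact ⟨Or.inr ⟨hw.1.1, (hsub hw.2).2⟩, hw.2⟩
          · intro z hzJ hzI
            have hzT := hzJ.2
            have hz0 : 0 ≤ z := (hsub hzT).1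
            have hzl : z ≤ l := (hsub hzT).2
            rcases hzJ.1 with hz | hz
            · have h1 := td_le_wrap2 l a b' z
              have h2 := td_le_sub_right l a hz.2
              linarith [hx.2]
            · have hzb : b' < z := by
                by_contra h; push_neg at h
                exact hzI (hIeq ▸ ⟨⟨hz.1, h⟩, hzT⟩)
              have h1 := td_le_sub_right l a (le_of_lt hzb)
              have h2 := td_le_wrap2 l a z y
              linarith [hx.2]
      · -- b' < y
        have hyb : b' < y := by
          by_contra h; push_neg at h
          exact hy' ⟨hya, h⟩
        have hxy : x ≤ y := by linarith [hx.2]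
        rw [td_eq_min l a hxy]
        rcases le_total (y - x) (x + (l - y) + a) with hm | hm
        · rw [min_eq_left hm]
          refine core b' hb'T hbound_b y hyT (Set.Icc a' y ∩ T) a' y
            ⟨ha'T, hyT, by linarith, Or.inl rfl⟩ ?_ ⟨⟨by linarith, le_refl y⟩, hyT⟩ hyI _ ?_
          · rw [hIeq]
            exact Set.inter_subset_inter_left _ (Set.Icc_subset_Icc_right (by linarith))
          · intro z hzJ hzI
            have hzT := hzJ.2
            have hzb : b' < z := by
              by_contra h; push_neg at h
              exact hzI (hIeq ▸ ⟨⟨hzJ.1.1, h⟩, hzT⟩)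
            have h1 := td_le_sub_right l a (le_of_lt hzb)
            have h2 := td_le_sub_right l a hzJ.1.2
            linarith [hx.2]
        · rw [min_eq_right hm]
          refine core a' ha'T hbound_a y hyT ((Set.Icc 0 b' ∪ Set.Icc y l) ∩ T) b' y
            ⟨hb'T, hyT, hyb, Or.inr rfl⟩ ?_ ⟨Or.inr ⟨le_refl y, hyl⟩, hyT⟩ hyI _ ?_
          · rw [hIeq]
            intro w hw
            exact ⟨Or.inl ⟨le_trans ha'0 hw.1.1, hw.1.2⟩, hw.2⟩
          · intro z hzJ hzI
            have hzT := hzJ.2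
            have hz0 : 0 ≤ z := (hsub hzT).1
            have hzl : z ≤ l := (hsub hzT).2
            rcases hzJ.1 with hz | hz
            · have hza : z < a' := by
                by_contra h; push_neg at h
                exact hzI (hIeq ▸ ⟨⟨h, hz.2⟩, hzT⟩)
              have h1 := td_le_sub_left l a (le_of_lt hza)
              have h2 := td_le_wrap1 l a z y
              linarith [hx.1]
            · have h1 := td_le_wrap1 l a a' z
              have h2 := td_le_sub_left l a hz.1
              linarith [hx.1]
    · -- I = (Icc 0 a' ∪ Icc b' l) ∩ T
      have hx : x ∈ Set.Icc 0 a' ∪ Set.Icc b' l := (hIeq ▸ hxI).1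
      have hy' : y ∉ Set.Icc 0 a' ∪ Set.Icc b' l := fun h => hyI (hIeq ▸ ⟨h, hyT⟩)
      have hya : a' < y := by
        by_contra h; push_neg at h
        exact hy' (Or.inl ⟨hy0, h⟩)
      have hyb : y < b' := by
        by_contra h; push_neg at h
        exact hy' (Or.inr ⟨h, hyl⟩)
      rcases hx with hx | hx
      · -- x ∈ [0, a'], so x < y
        have hxy : x ≤ y := by linarith [hx.2]
        rw [td_eq_min l a hxy]
        rcases le_total (y - x) (x + (l - y) + a) with hm | hm
        · rw [min_eq_left hm]
          refine core a' ha'T hbound_a y hyT ((Set.Icc 0 y ∪ Set.Icc b' l) ∩ T) y b'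
            ⟨hyT, hb'T, hyb, Or.inr rfl⟩ ?_ ⟨Or.inl ⟨hy0, le_refl y⟩, hyT⟩ hyI _ ?_
          · rw [hIeq]
            intro w hw
            rcases hw.1 with h | h
            · exact ⟨Or.inl ⟨h.1, by linarith [h.2]⟩, hw.2⟩
            · exact ⟨Or.inr h, hw.2⟩
          · intro z hzJ hzI
            have hzT := hzJ.2
            rcases hzJ.1 with hz | hz
            · have hza : a' < z := by
                by_contra h; push_neg at h
                exact hzI (hIeq ▸ ⟨Or.inl ⟨hz.1, h⟩, hzT⟩)
              have h1 := td_le_sub_right l a (le_of_lt hza)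
              have h2 := td_le_sub_right l a hz.2
              linarith [hx.2]
            · exact absurd (hIeq ▸ ⟨Or.inr hz, hzT⟩) hzI
        · rw [min_eq_right hm]
          refine core b' hb'T hbound_b y hyT ((Set.Icc 0 a' ∪ Set.Icc y l) ∩ T) a' y
            ⟨ha'T, hyT, hya, Or.inr rfl⟩ ?_ ⟨Or.inr ⟨le_refl y, hyl⟩, hyT⟩ hyI _ ?_
          · rw [hIeq]
            intro w hw
            rcases hw.1 with h | h
            · exact ⟨Or.inl h, hw.2⟩
            · exact ⟨Or.inr ⟨by linarith [h.1], h.2⟩, hw.2⟩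
          · intro z hzJ hzI
            have hzT := hzJ.2
            rcases hzJ.1 with hz | hz
            · exact absurd (hIeq ▸ ⟨Or.inl hz, hzT⟩) hzI
            · have hzb : z < b' := by
                by_contra h; push_neg at h
                exact hzI (hIeq ▸ ⟨Or.inr ⟨h, hz.2⟩, hzT⟩)
              have h1 := td_le_sub_left l a (le_of_lt hzb)
              have h2 := td_le_sub_left l a hz.1
              linarith [hx.1]
      · -- x ∈ [b', l], so y < x
        have hyx : y ≤ x := by linarith [hx.1]
        rw [td_comm, td_eq_min l a hyx]
        rcases le_total (x - y) (y + (l - x) + a) with hm | hm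
        · rw [min_eq_left hm]
          refine core b' hb'T hbound_b y hyT ((Set.Icc 0 a' ∪ Set.Icc y l) ∩ T) a' y
            ⟨ha'T, hyT, hya, Or.inr rfl⟩ ?_ ⟨Or.inr ⟨le_refl y, hyl⟩, hyT⟩ hyI _ ?_
          · rw [hIeq]
            intro w hw
            rcases hw.1 with h | h
            · exact ⟨Or.inl h, hw.2⟩
            · exact ⟨Or.inr ⟨by linarith [h.1], h.2⟩, hw.2⟩
          · intro z hzJ hzI
            have hzT := hzJ.2
            rcases hzJ.1 with hz | hz
            · exact absurd (hIeq ▸ ⟨Or.inl hz, hzT⟩) hzI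
            · have hzb : z < b' := by
                by_contra h; push_neg at h
                exact hzI (hIeq ▸ ⟨Or.inr ⟨h, hz.2⟩, hzT⟩)
              have h1 := td_le_sub_left l a (le_of_lt hzb)
              have h2 := td_le_sub_left l a hz.1
              linarith [hx.1]
        · rw [min_eq_right hm]
          refine core a' ha'T hbound_a y hyT ((Set.Icc 0 y ∪ Set.Icc b' l) ∩ T) y b'
            ⟨hyT, hb'T, hyb, Or.inr rfl⟩ ?_ ⟨Or.inl ⟨hy0, le_refl y⟩, hyT⟩ hyI _ ?_
          · rw [hIeq]
            intro w hw
            rcases hw.1 with h | h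
            · exact ⟨Or.inl ⟨h.1, by linarith [h.2]⟩, hw.2⟩
            · exact ⟨Or.inr h, hw.2⟩
          · intro z hzJ hzI
            have hzT := hzJ.2
            rcases hzJ.1 with hz | hz
            · have hza : a' < z := by
                by_contra h; push_neg at h
                exact hzI (hIeq ▸ ⟨Or.inl ⟨hz.1, h⟩, hzT⟩)
              have h1 := td_le_sub_right l a (le_of_lt hza)
              have h2 := td_le_sub_right l a hz.2
              linarith [hx.2, ha'0]
            · exact absurd (hIeq ▸ ⟨Or.inr hz, hzT⟩) hzI
  -- final assembly
  intro x hx y hy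
  by_cases hxI : x ∈ I <;> by_cases hyI : y ∈ I
  · rw [(hGdef x).1 hxI, (hGdef y).1 hyI, dist_self]
    exact mul_nonneg hK (td_nonneg l (le_of_lt ha) (hsub hx) (hsub hy))
  · rw [(hGdef x).1 hxI, (hGdef y).2 hyI]
    exact mixed x hxI y hy hyI
  · rw [(hGdef x).2 hxI, (hGdef y).1 hyI, dist_comm, td_comm]
    exact mixed y hyI x hx hxI
  · rw [(hGdef x).2 hxI, (hGdef y).2 hyI]
    exact hFlip x hx y hy
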